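/- arXiv:0909.5147 — 3 statements merged into one kernel-verified Lean document; each statement's English description precedes it below -/
import Mathlib

section
/- Let W be a ℂ[Γ]-module, q ≥ 1 and w ∈ H⁰_{q,P}(Γ,W). Then the order lowering map Λ(w): Γ → H⁰_{q−1,P}(Γ,W)/H⁰_{q−2,P}(Γ,W), defined by γ ↦ (γ−1)·w modulo H⁰_{q−2,P}(Γ,W), is a group homomorphism which vanishes on P; moreover Λ(w) is the zero homomorphism if and only if w ∈ H⁰_{q−1,P}(Γ,W). -/
/-!
Write `annJ P n` for the annihilator of `J_n = I_Γ^n + Ĩ_P`, so that `H⁰_{q,P} = annJ P (q + 1)`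
for all `q ≥ -1` (the convention `H⁰_{-1,P} = 0` being the case `n = 0`).
Since `I_Γ` is spanned over `ℂ` by the elements `γ - 1`, a `P`-invariant vector lies in
`annJ P (n + 1)` exactly when every `(γ - 1) • w` lies in `annJ P n`; normality of `P` makes
`(γ - 1) • w` again `P`-invariant. Everything then follows from the identity
`(γτ - 1) - (γ - 1) - (τ - 1) = (γ - 1)(τ - 1)`.
-/

/-- The augmentation homomorphism `ℂ[Γ] → ℂ`, sending `∑ c_γ γ` to `∑ c_γ`. -/
noncomputable def aug (Γ : Type*) [Group Γ] : MonoidAlgebra ℂ Γ →ₐ[ℂ] ℂ :=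
  MonoidAlgebra.lift ℂ ℂ Γ 1

/-- The augmentation ideal `I_Γ`, the kernel of the augmentation homomorphism. -/
noncomputable def augIdeal (Γ : Type*) [Group Γ] : Ideal (MonoidAlgebra ℂ Γ) :=
  RingHom.ker (aug Γ).toRingHom

/-- The space `H⁰_{q,P}(Γ,W) = {w ∈ W : J_{q+1} w = 0}` of invariants of type `P` and
order `q`. -/
def Hset (Γ : Type*) [Group Γ] (P : Subgroup Γ) (W : Type*) [AddCommGroup W]
    [Module (MonoidAlgebra ℂ Γ) W] (q : ℕ) : Set W :=
  {w | (∀ x : Fin (q + 1) → MonoidAlgebra ℂ Γ,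
          (∀ i, x i ∈ augIdeal Γ) → (List.ofFn x).prod • w = 0) ∧
        ∀ p : Γ, p ∈ P → (MonoidAlgebra.of ℂ Γ p) • w = w}

/-- `H⁰_{q,P}(Γ,W)` for an integer index `q`, with the convention that it is `0`
for `q < 0`. -/
def Hz (Γ : Type*) [Group Γ] (P : Subgroup Γ) (W : Type*) [AddCommGroup W]
    [Module (MonoidAlgebra ℂ Γ) W] (q : ℤ) : Set W :=
  if 0 ≤ q then Hset Γ P W q.toNat else {0}

open MonoidAlgebra

lemma sub_one_smul_sub_one_smul {R M : Type*} [Ring R] [AddCommGroup M] [Module R M]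
    (a b : R) (m : M) :
    (a * b - 1) • m - (a - 1) • m - (b - 1) • m = (a - 1) • (b - 1) • m := by
  rw [← mul_smul, ← sub_smul, ← sub_smul]
  congr 1
  noncomm_ring

lemma List.prod_ofFn_snoc {M : Type*} [Monoid M] {n : ℕ} (x : Fin n → M) (y : M) :
    (List.ofFn (Fin.snoc x y)).prod = (List.ofFn x).prod * y := by
  rw [List.ofFn_succ']
  simp

section Augmentation

variable {Γ : Type*} [Group Γ]

lemma of_sub_one_mem_augIdeal (γ : Γ) : of ℂ Γ γ - 1 ∈ augIdeal Γ := by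
  simp [augIdeal, RingHom.mem_ker, aug, lift_single]

lemma mem_span_of_sub_one_of_mem_augIdeal {x : MonoidAlgebra ℂ Γ} (hx : x ∈ augIdeal Γ) :
    x ∈ Submodule.span ℂ (Set.range fun γ : Γ => of ℂ Γ γ - 1) := by
  have hsum : ∑ γ ∈ x.coeff.support, x.coeff γ = 0 := by
    simpa [augIdeal, RingHom.mem_ker, aug, lift_apply, Finsupp.sum] using hx
  have hx_eq : x = ∑ γ ∈ x.coeff.support, x.coeff γ • (of ℂ Γ γ - 1) := calc
    x = ∑ γ ∈ x.coeff.support, x.coeff γ • of ℂ Γ γ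
          - (∑ γ ∈ x.coeff.support, x.coeff γ) • (1 : MonoidAlgebra ℂ Γ) := by
      rw [hsum, zero_smul, sub_zero]
      conv_lhs => rw [← sum_coeff_single x]
      exact Finset.sum_congr rfl fun γ _ => by rw [of_apply, smul_single', mul_one]
    _ = _ := by simp only [smul_sub, Finset.sum_sub_distrib, Finset.sum_smul]
  rw [hx_eq]
  exact Submodule.sum_mem _ fun γ _ => Submodule.smul_mem _ _ (Submodule.subset_span ⟨γ, rfl⟩)

variable {W : Type*} [AddCommGroup W] [Module (MonoidAlgebra ℂ Γ) W]

variable (Γ) in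
/-- `I_Γ^n • w = 0`, in the form used by `Hset`. -/
def AnnihilatedByAugPow (n : ℕ) (w : W) : Prop :=
  ∀ x : Fin n → MonoidAlgebra ℂ Γ, (∀ i, x i ∈ augIdeal Γ) → (List.ofFn x).prod • w = 0

lemma annihilatedByAugPow_zero_iff {w : W} : AnnihilatedByAugPow Γ 0 w ↔ w = 0 := by
  simp [AnnihilatedByAugPow]

lemma annihilatedByAugPow_succ_iff {n : ℕ} {w : W} :
    AnnihilatedByAugPow Γ (n + 1) w ↔
      ∀ γ : Γ, AnnihilatedByAugPow Γ n ((of ℂ Γ γ - 1) • w) := by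
  constructor
  · intro hw γ x hx
    rw [← mul_smul, ← List.prod_ofFn_snoc]
    exact hw _ fun i => Fin.lastCases (by simpa using of_sub_one_mem_augIdeal γ)
      (fun j => by simpa using hx j) i
  · intro hw x hx
    rw [List.ofFn_succ', List.prod_concat]
    refine Submodule.span_induction (p := fun y _ => (_ * y) • w = 0) ?_ (by simp) ?_ ?_
      (mem_span_of_sub_one_of_mem_augIdeal (hx (Fin.last n)))
    · rintro _ ⟨γ, rfl⟩
      rw [mul_smul]
      exact hw γ _ fun i => hx _
    · intro y z _ _ hy hz
      rw [mul_add, add_smul, hy, hz, add_zero]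
    · intro c y _ hy
      rw [mul_smul_comm, Algebra.smul_def, mul_smul, hy, smul_zero]

variable (P : Subgroup Γ)

def annJ (n : ℕ) : Set W :=
  {w | AnnihilatedByAugPow Γ n w ∧ ∀ p ∈ P, of ℂ Γ p • w = w}

lemma zero_mem_annJ (n : ℕ) : (0 : W) ∈ annJ P n :=
  ⟨fun _ _ => smul_zero _, fun _ _ => smul_zero _⟩

lemma Hz_eq_annJ {q : ℤ} (hq : -1 ≤ q) : Hz Γ P W q = annJ P (q + 1).toNat := by
  unfold Hz
  split_ifs with h
  · rw [show (q + 1).toNat = q.toNat + 1 by omega]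
    rfl
  · ext w
    rw [show (q + 1).toNat = 0 by omega, Set.mem_singleton_iff]
    exact ⟨fun hw => hw ▸ zero_mem_annJ P 0,
      fun hw => annihilatedByAugPow_zero_iff.mp hw.1⟩

variable {P}

lemma of_smul_smul_eq_of_normal [P.Normal] {w : W} (hw : ∀ p ∈ P, of ℂ Γ p • w = w) (γ : Γ) :
    ∀ p ∈ P, of ℂ Γ p • of ℂ Γ γ • w = of ℂ Γ γ • w := by
  intro p hp
  have hconj : γ⁻¹ * p * γ ∈ P := by simpa using ‹P.Normal›.conj_mem p hp γ⁻¹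
  rw [← mul_smul, ← map_mul, show p * γ = γ * (γ⁻¹ * p * γ) by group, map_mul, mul_smul,
    hw _ hconj]

lemma mem_annJ_succ_iff [P.Normal] {n : ℕ} {w : W} :
    w ∈ annJ P (n + 1) ↔
      (∀ p ∈ P, of ℂ Γ p • w = w) ∧ ∀ γ : Γ, (of ℂ Γ γ - 1) • w ∈ annJ P n := by
  refine ⟨fun hw => ⟨hw.2, fun γ => ⟨annihilatedByAugPow_succ_iff.mp hw.1 γ, ?_⟩⟩,
    fun hw => ⟨annihilatedByAugPow_succ_iff.mpr fun γ => (hw.2 γ).1, hw.1⟩⟩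
  intro p hp
  rw [sub_smul, one_smul, smul_sub, of_smul_smul_eq_of_normal hw.2 γ p hp, hw.2 p hp]

lemma sub_one_smul_mem_annJ [P.Normal] {n : ℕ} {w : W} (hw : w ∈ annJ P (n + 1)) (γ : Γ) :
    (of ℂ Γ γ - 1) • w ∈ annJ P n :=
  (mem_annJ_succ_iff.mp hw).2 γ

end Augmentation

/-- For `q ≥ 1` and `w ∈ H⁰_{q,P}(Γ,W)`, the order lowering map
`Λ(w) : γ ↦ (γ-1)·w mod H⁰_{q-2,P}` is a group homomorphism into
`H⁰_{q-1,P}/H⁰_{q-2,P}` (i.e. `Λ(w)(γτ) ≡ Λ(w)(γ) + Λ(w)(τ) mod H⁰_{q-2,P}`)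
which vanishes on `P`, and `Λ(w)` is the zero homomorphism if and only if
`w ∈ H⁰_{q-1,P}(Γ,W)`. -/
theorem stmt3 (Γ : Type*) [Group Γ] (P : Subgroup Γ) [P.Normal]
    (W : Type*) [AddCommGroup W] [Module (MonoidAlgebra ℂ Γ) W]
    (q : ℤ) (hq : 1 ≤ q) (w : W) (hw : w ∈ Hz Γ P W q) :
    (∀ γ τ : Γ,
      (MonoidAlgebra.of ℂ Γ (γ * τ) - 1) • w
        - (MonoidAlgebra.of ℂ Γ γ - 1) • w - (MonoidAlgebra.of ℂ Γ τ - 1) • w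
        ∈ Hz Γ P W (q - 2)) ∧
    (∀ γ : Γ, (MonoidAlgebra.of ℂ Γ γ - 1) • w ∈ Hz Γ P W (q - 1)) ∧
    (∀ p ∈ P, (MonoidAlgebra.of ℂ Γ p - 1) • w ∈ Hz Γ P W (q - 2)) ∧
    ((∀ γ : Γ, (MonoidAlgebra.of ℂ Γ γ - 1) • w ∈ Hz Γ P W (q - 2)) ↔
      w ∈ Hz Γ P W (q - 1)) := by
  obtain ⟨n, rfl⟩ : ∃ n : ℕ, q = n + 1 := ⟨(q - 1).toNat, by omega⟩
  have hHz : ∀ k : ℕ, Hz Γ P W (k - 1) = annJ P k := fun k => by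
    rw [Hz_eq_annJ P (by omega)]
    congr
    omega
  rw [show (n : ℤ) + 1 = (n + 2 : ℕ) - 1 by push_cast; ring] at hw ⊢
  rw [show ((n + 2 : ℕ) : ℤ) - 1 - 1 = (n + 1 : ℕ) - 1 by push_cast; ring,
    show ((n + 2 : ℕ) : ℤ) - 1 - 2 = (n : ℕ) - 1 by push_cast; ring]
  simp only [hHz] at hw ⊢
  refine ⟨fun γ τ => ?_, sub_one_smul_mem_annJ hw, fun p hp => ?_, ?_⟩
  · rw [map_mul, sub_one_smul_sub_one_smul]
    exact sub_one_smul_mem_annJ (sub_one_smul_mem_annJ hw τ) γ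
  · rw [sub_smul, one_smul, hw.2 p hp, sub_self]
    exact zero_mem_annJ P n
  · rw [mem_annJ_succ_iff]
    exact ⟨fun h => ⟨hw.2, h⟩, And.right⟩
end

section
/- Let a countable group Γ act on a measure space (X,μ) by measurable measure-preserving bijections, let D ⊆ X be a measurable subset with Γ·D = X, and let S ⊆ Γ be a finite symmetric set of generators of Γ containing the identity element. Let q ≥ 0 and let f: X → ℂ be measurable such that for all γ_0,…,γ_q ∈ Γ one has ((γ_0−1)(γ_1−1)⋯(γ_q−1)·f) = 0 almost everywhere, where Γ acts on functions by (γ·f)(x) = f(γ^{−1}·x). If ∫_{S^q·D} |f|² dμ < ∞, then ∫_{S^{q+j}·D} |f|² dμ < ∞ for every integer j ≥ 0. -/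
open MeasureTheory

/-- The action of `(γ - 1) ∈ ℂ[Γ]` on complex-valued functions on `X`,
where `(γ·f)(x) = f(γ⁻¹·x)`. -/
def diffAct {Γ X : Type*} [Group Γ] [MulAction Γ X] (γ : Γ) (f : X → ℂ) : X → ℂ :=
  fun x => f (γ⁻¹ • x) - f x

/-- The set `S^k·D` of all `s₁⋯s_k·d` with `sᵢ ∈ S`, `d ∈ D`. -/
def SpowD {Γ X : Type*} [Group Γ] [MulAction Γ X] (S : Finset Γ) (k : ℕ)
    (D : Set X) : Set X :=
  {x | ∃ s : Fin k → Γ, (∀ i, s i ∈ S) ∧ ∃ d ∈ D, x = (List.ofFn s).prod • d}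

/-!
Since `S^{k+1}·D = ⋃_{s ∈ S} s·S^k·D` and `f(s·x) = ((s⁻¹ - 1)·f)(x) + f(x)`, the function `f` is
square-integrable on `S^{k+1}·D` as soon as `f` and all the differences `(s⁻¹ - 1)·f`, `s ∈ S`, are
square-integrable on `S^k·D`. Conversely, as `1 ∈ S`, square-integrability of `f` on `S^q·D`
gives that of each difference on `S^{q-1}·D`. A difference is annihilated by `q` further
differences, so induction on `q` applies; for `q = 0` the differences vanish almost everywhere.
-/

open scoped Pointwise ENNReal

section MemLpTwo

variable {α E : Type*} [MeasurableSpace α] [NormedAddCommGroup E] {μ : Measure α} {f : α → E}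

theorem memLp_two_iff_lintegral_nnnorm_sq_lt_top (hf : AEStronglyMeasurable f μ) :
    MemLp f 2 μ ↔ ∫⁻ x, (‖f x‖₊ : ℝ≥0∞) ^ 2 ∂μ < ⊤ := by
  simp [MemLp, hf, enorm_eq_nnnorm,
    eLpNorm_lt_top_iff_lintegral_rpow_enorm_lt_top two_ne_zero ENNReal.ofNat_ne_top]

theorem memLp_two_restrict_biUnion_finset {ι : Type*} {T : Finset ι} {s : ι → Set α}
    (hf : ∀ i ∈ T, MemLp f 2 (μ.restrict (s i))) : MemLp f 2 (μ.restrict (⋃ i ∈ T, s i)) := by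
  have hmeas : AEStronglyMeasurable f (μ.restrict (⋃ i ∈ T, s i)) := by
    rw [← Finset.set_biUnion_coe, Set.biUnion_eq_iUnion]
    exact .iUnion fun i => (hf i i.2).1
  rw [memLp_two_iff_integrable_sq_norm hmeas]
  exact integrableOn_finset_iUnion.2 fun i hi =>
    (memLp_two_iff_integrable_sq_norm (hf i hi).1).1 (hf i hi)

end MemLpTwo

section Action

variable {Γ X : Type*} [Group Γ] [MulAction Γ X] [MeasurableSpace X] [MeasurableConstSMul Γ X]
  {μ : Measure X} [SMulInvariantMeasure Γ X μ]

theorem memLp_restrict_smul_set_iff {E : Type*} [NormedAddCommGroup E] {p : ℝ≥0∞} {f : X → E}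
    (γ : Γ) (s : Set X) :
    MemLp f p (μ.restrict (γ • s)) ↔ MemLp (fun x => f (γ • x)) p (μ.restrict s) := by
  have hγ := (measurePreserving_smul γ μ).restrict_image_emb (measurableEmbedding_const_smul γ) s
  rw [Set.image_smul] at hγ
  rw [← hγ.map_eq, (measurableEmbedding_const_smul γ).memLp_map_measure_iff]
  rfl

end Action

section SpowD

variable {Γ X : Type*} [Group Γ] [MulAction Γ X] (S : Finset Γ) (D : Set X)

theorem spowD_succ (k : ℕ) : SpowD S (k + 1) D = ⋃ s ∈ S, s • SpowD S k D := by
  ext x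
  simp only [SpowD, Set.mem_iUnion, Set.mem_smul_set]
  constructor
  · rintro ⟨s, hs, d, hd, rfl⟩
    refine ⟨s 0, hs 0, (List.ofFn (Fin.tail s)).prod • d,
      ⟨Fin.tail s, fun i => hs _, d, hd, rfl⟩, ?_⟩
    rw [List.ofFn_succ, List.prod_cons, mul_smul]
    rfl
  · rintro ⟨a, ha, y, ⟨s, hs, d, hd, rfl⟩, rfl⟩
    exact ⟨Fin.cons a s, Fin.cases ha hs, d, hd, by simp [mul_smul]⟩

theorem smul_spowD_subset_succ {s : Γ} (hs : s ∈ S) (k : ℕ) :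
    s • SpowD S k D ⊆ SpowD S (k + 1) D :=
  spowD_succ S D k ▸ Set.subset_biUnion_of_mem (u := fun s => s • SpowD S k D) hs

theorem spowD_subset_succ (hS : (1 : Γ) ∈ S) (k : ℕ) : SpowD S k D ⊆ SpowD S (k + 1) D := by
  simpa using smul_spowD_subset_succ S D hS k

end SpowD

section DiffAct

variable {Γ X : Type*} [Group Γ] [MulAction Γ X]

theorem diffAct_inv (γ : Γ) (f : X → ℂ) : diffAct γ⁻¹ f = fun x => f (γ • x) - f x := by
  unfold diffAct
  rw [inv_inv]

theorem foldr_diffAct_ofFn_snoc {n : ℕ} (g : Fin n → Γ) (γ : Γ) (f : X → ℂ) :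
    (List.ofFn (Fin.snoc g γ)).foldr diffAct f = (List.ofFn g).foldr diffAct (diffAct γ f) := by
  rw [List.ofFn_succ']
  simp [List.concat_eq_append]

end DiffAct

section Propagation

variable {Γ X : Type*} [Group Γ] [MulAction Γ X] [MeasurableSpace X] [MeasurableConstSMul Γ X]
  {μ : Measure X} [SMulInvariantMeasure Γ X μ] {S : Finset Γ} {D : Set X} {f : X → ℂ}

theorem memLp_diffAct_inv_of_memLp_spowD_succ {p : ℝ≥0∞} (hS : (1 : Γ) ∈ S) {s : Γ} (hs : s ∈ S)
    {k : ℕ} (hf : MemLp f p (μ.restrict (SpowD S (k + 1) D))) :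
    MemLp (diffAct s⁻¹ f) p (μ.restrict (SpowD S k D)) := by
  have hshift : MemLp (fun x => f (s • x)) p (μ.restrict (SpowD S k D)) :=
    (memLp_restrict_smul_set_iff s _).1
      (hf.mono_measure (Measure.restrict_mono (smul_spowD_subset_succ S D hs k) le_rfl))
  rw [diffAct_inv]
  exact hshift.sub (hf.mono_measure (Measure.restrict_mono (spowD_subset_succ S D hS k) le_rfl))

theorem memLp_spowD_succ_of_diffAct_inv {k : ℕ} (hf : MemLp f 2 (μ.restrict (SpowD S k D)))
    (hdiff : ∀ s ∈ S, MemLp (diffAct s⁻¹ f) 2 (μ.restrict (SpowD S k D))) :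
    MemLp f 2 (μ.restrict (SpowD S (k + 1) D)) := by
  rw [spowD_succ]
  refine memLp_two_restrict_biUnion_finset fun s hs => (memLp_restrict_smul_set_iff s _).2 ?_
  have hshift : (fun x => f (s • x)) = diffAct s⁻¹ f + f := by
    rw [diffAct_inv]
    ext x
    simp
  exact hshift ▸ (hdiff s hs).add hf

theorem memLp_spowD_add_of_diffAct_inv {k : ℕ} (hf : MemLp f 2 (μ.restrict (SpowD S k D)))
    (hdiff : ∀ s ∈ S, ∀ j, MemLp (diffAct s⁻¹ f) 2 (μ.restrict (SpowD S (k + j) D))) (j : ℕ) :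
    MemLp f 2 (μ.restrict (SpowD S (k + j) D)) := by
  induction j with
  | zero => exact hf
  | succ j ih => exact memLp_spowD_succ_of_diffAct_inv ih fun s hs => hdiff s hs j

theorem memLp_spowD_add (hS : (1 : Γ) ∈ S) (q : ℕ) (f : X → ℂ)
    (hf : ∀ g : Fin (q + 1) → Γ, (List.ofFn g).foldr diffAct f =ᵐ[μ] 0)
    (hL2 : MemLp f 2 (μ.restrict (SpowD S q D))) (j : ℕ) :
    MemLp f 2 (μ.restrict (SpowD S (q + j) D)) := by
  induction q generalizing f j with
  | zero =>
    refine memLp_spowD_add_of_diffAct_inv hL2 (fun s _ i => MemLp.zero.ae_eq ?_) j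
    have hzero : diffAct s⁻¹ f =ᵐ[μ] 0 := by simpa using hf fun _ => s⁻¹
    exact hzero.restrict.symm
  | succ q ih =>
    refine memLp_spowD_add_of_diffAct_inv hL2 (fun s hs i => ?_) j
    have hdiff := ih (diffAct s⁻¹ f)
      (fun g => by simpa only [foldr_diffAct_ofFn_snoc] using hf (Fin.snoc g s⁻¹))
      (memLp_diffAct_inv_of_memLp_spowD_succ hS hs hL2) (i + 1)
    rwa [show q + 1 + i = q + (i + 1) by omega]

end Propagation

theorem stmt6_general {Γ X : Type*} [Group Γ] [MulAction Γ X]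
    [MeasurableSpace X] (μ : Measure X)
    (hact : ∀ γ : Γ, MeasurePreserving (fun x : X => γ • x) μ μ)
    (D : Set X)
    (S : Finset Γ) (hSone : (1 : Γ) ∈ S)
    (q : ℕ) (f : X → ℂ) (hfmeas : Measurable f)
    (hf : ∀ g : Fin (q + 1) → Γ, (List.ofFn g).foldr diffAct f =ᵐ[μ] 0)
    (hint : ∫⁻ x in SpowD S q D, (‖f x‖₊ : ENNReal) ^ 2 ∂μ < ⊤) :
    ∀ j : ℕ, ∫⁻ x in SpowD S (q + j) D, (‖f x‖₊ : ENNReal) ^ 2 ∂μ < ⊤ := by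
  have : MeasurableConstSMul Γ X := ⟨fun γ => (hact γ).measurable⟩
  have : SMulInvariantMeasure Γ X μ :=
    ⟨fun γ _ hs => (hact γ).measure_preimage hs.nullMeasurableSet⟩
  intro j
  rw [← memLp_two_iff_lintegral_nnnorm_sq_lt_top hfmeas.aestronglyMeasurable] at hint ⊢
  exact memLp_spowD_add hSone q f hf hint j

/-- If a countable group `Γ` acts on a measure space by measure preserving
(measurable) bijections, `f` is measurable and of higher order `q` up to null
functions, `D` is measurable with `Γ·D = X`, and `S` a finite symmetric generating
set containing `1`, then square-integrability of `f` on `S^q·D` implies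
square-integrability of `f` on `S^{q+j}·D` for every `j ≥ 0`. -/
theorem stmt6 {Γ X : Type*} [Group Γ] [Countable Γ] [MulAction Γ X]
    [MeasurableSpace X] (μ : Measure X)
    (hact : ∀ γ : Γ, MeasurePreserving (fun x : X => γ • x) μ μ)
    (D : Set X) (hDmeas : MeasurableSet D)
    (hD : ∀ x : X, ∃ γ : Γ, ∃ d ∈ D, x = γ • d)
    (S : Finset Γ) (hSsym : ∀ s ∈ S, s⁻¹ ∈ S) (hSone : (1 : Γ) ∈ S)
    (hSgen : Subgroup.closure (S : Set Γ) = ⊤)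
    (q : ℕ) (f : X → ℂ) (hfmeas : Measurable f)
    (hf : ∀ g : Fin (q + 1) → Γ, (List.ofFn g).foldr diffAct f =ᵐ[μ] 0)
    (hint : ∫⁻ x in SpowD S q D, (‖f x‖₊ : ENNReal) ^ 2 ∂μ < ⊤) :
    ∀ j : ℕ, ∫⁻ x in SpowD S (q + j) D, (‖f x‖₊ : ENNReal) ^ 2 ∂μ < ⊤ :=
  stmt6_general μ hact D S hSone q f hfmeas hf hint
end

section
/- Let f: ℂ∖ℝ → V be holomorphic with f(z+1) = η(T)·f(z) for all z ∈ ℂ∖ℝ, and define ψ(z) = f(z) − z^{−2ν−1}·η(S)(f(−1/z)) for z ∈ ℂ∖ℝ. Then ψ satisfies the Lewis equation at every z ∈ ℂ∖ℝ, i.e. η(T)ψ(z) = ψ(z+1) + (z+1)^{−2ν−1}·η(ST^{−1})(ψ(z/(z+1))) for all z ∈ ℂ∖ℝ. -/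
/-!
Write `s = -2ν-1` and `w = z/(z+1)`. Expanding `ψ` on both sides of the Lewis equation, the
terms `f(z+1) = η(T) f(z)` match by periodicity. Since `-1/(z+1) + 1 = w` and
`η(ST⁻¹) η(T) = η(S)`, the term in `f(-1/(z+1))` cancels. Since `-1/w + 1 = -1/z` and
`ST⁻¹S = TST`, what is left is `(z+1)^s w^s η(TS) f(-1/z)` against `z^s η(TS) f(-1/z)`. The
cocycle identity `(z+1)^s w^s = z^s` holds for the principal branch because `z+1`, `w` and `z`
lie in the same half-plane, so the arguments add up without wrapping around.
-/

open Complex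

/-- `SL₂(ℤ)`. -/
abbrev SL2Z := Matrix.SpecialLinearGroup (Fin 2) ℤ

/-- The matrix `T = [[1,1],[0,1]]`. -/
def Tm : SL2Z := ⟨!![1, 1; 0, 1], by norm_num [Matrix.det_fin_two_of]⟩

/-- The matrix `S = [[0,1],[−1,0]]`. -/
def Sm : SL2Z := ⟨!![0, 1; -1, 0], by norm_num [Matrix.det_fin_two_of]⟩

/-- The matrix `T' = [[1,0],[1,1]]`. -/
def Tm' : SL2Z := ⟨!![1, 0; 1, 1], by norm_num [Matrix.det_fin_two_of]⟩

/-- The matrix `−I`. -/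
def negI : SL2Z := ⟨!![-1, 0; 0, -1], by norm_num [Matrix.det_fin_two_of]⟩

/-- `ψ` satisfies the Lewis equation with parameter `ν` at the point `z`. -/
def LewisEq {V : Type*} [NormedAddCommGroup V] [NormedSpace ℂ V]
    (η : SL2Z →* Module.End ℂ V) (ν : ℂ) (ψ : ℂ → V) (z : ℂ) : Prop :=
  η Tm (ψ z) =
    ψ (z + 1) + ((z + 1) ^ (-2 * ν - 1)) • η (Sm * Tm⁻¹) (ψ (z / (z + 1)))

open Real

namespace Complex

theorem im_div_add_one (z : ℂ) : (z / (z + 1)).im = z.im / normSq (z + 1) := by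
  simp [div_im]
  ring

theorem im_neg_one_div (z : ℂ) : (-1 / z).im = z.im / normSq z := by
  simp [div_im]
  ring

theorem ne_zero_of_im_ne_zero {z : ℂ} (hz : z.im ≠ 0) : z ≠ 0 :=
  ne_of_apply_ne im (by simpa using hz)

theorem add_one_ne_zero_of_im_ne_zero {z : ℂ} (hz : z.im ≠ 0) : z + 1 ≠ 0 :=
  fun h => hz (by simpa using congrArg im h)

theorem im_div_add_one_ne_zero {z : ℂ} (hz : z.im ≠ 0) : (z / (z + 1)).im ≠ 0 := by
  rw [im_div_add_one]
  exact div_ne_zero hz (normSq_pos.2 (add_one_ne_zero_of_im_ne_zero hz)).ne'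

theorem im_neg_one_div_ne_zero {z : ℂ} (hz : z.im ≠ 0) : (-1 / z).im ≠ 0 := by
  rw [im_neg_one_div]
  exact div_ne_zero hz (normSq_pos.2 (ne_zero_of_im_ne_zero hz)).ne'

theorem arg_mul_of_im_pos {x y : ℂ} (hx : 0 < x.im) (hy : 0 < y.im) (hxy : 0 < (x * y).im) :
    arg (x * y) = arg x + arg y := by
  have hx₀ : x ≠ 0 := ne_zero_of_im_ne_zero hx.ne'
  have hy₀ : y ≠ 0 := ne_zero_of_im_ne_zero hy.ne'
  refine (arg_mul_eq_add_arg_iff hx₀ hy₀).2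
    ⟨by linarith [arg_nonneg_iff.2 hx.le, arg_nonneg_iff.2 hy.le, pi_pos], ?_⟩
  by_contra! h
  have hwrap : arg (x * y) = arg x + arg y - 2 * π := by
    rw [← arg_coe_angle_toReal_eq_arg, arg_mul_coe_angle hx₀ hy₀, ← Real.Angle.coe_add,
      Real.Angle.toReal_coe_eq_self_sub_two_pi_iff]
    exact ⟨h, by linarith [arg_le_pi x, arg_le_pi y, pi_pos]⟩
  linarith [arg_nonneg_iff.2 hxy.le, arg_lt_pi_iff.2 (Or.inr hx.ne'),
    arg_lt_pi_iff.2 (Or.inr hy.ne')]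

theorem arg_mul_of_im_neg {x y : ℂ} (hx : x.im < 0) (hy : y.im < 0) (hxy : (x * y).im < 0) :
    arg (x * y) = arg x + arg y := by
  have hx₀ : x ≠ 0 := ne_zero_of_im_ne_zero hx.ne
  have hy₀ : y ≠ 0 := ne_zero_of_im_ne_zero hy.ne
  refine (arg_mul_eq_add_arg_iff hx₀ hy₀).2
    ⟨?_, by linarith [arg_neg_iff.2 hx, arg_neg_iff.2 hy, pi_pos]⟩
  by_contra! h
  have hwrap : arg (x * y) = arg x + arg y + 2 * π := by
    rw [← arg_coe_angle_toReal_eq_arg, arg_mul_coe_angle hx₀ hy₀, ← Real.Angle.coe_add,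
      Real.Angle.toReal_coe_eq_self_add_two_pi_iff]
    exact ⟨by linarith [neg_pi_lt_arg x, neg_pi_lt_arg y], h⟩
  linarith [arg_neg_iff.2 hxy, neg_pi_lt_arg x, neg_pi_lt_arg y]

theorem mul_cpow_of_arg_mul_eq_add {x y : ℂ} (hx : x ≠ 0) (hy : y ≠ 0)
    (h : arg (x * y) = arg x + arg y) (s : ℂ) : (x * y) ^ s = x ^ s * y ^ s := by
  rw [cpow_def_of_ne_zero (mul_ne_zero hx hy), cpow_def_of_ne_zero hx, cpow_def_of_ne_zero hy,
    log_mul hx hy ((arg_mul_eq_add_arg_iff hx hy).1 h), add_mul, exp_add]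

theorem cpow_add_one_mul_cpow_div_add_one {z : ℂ} (hz : z.im ≠ 0) (s : ℂ) :
    (z + 1) ^ s * (z / (z + 1)) ^ s = z ^ s := by
  have hz₀ : z ≠ 0 := ne_zero_of_im_ne_zero hz
  have hz₁ : z + 1 ≠ 0 := add_one_ne_zero_of_im_ne_zero hz
  have hprod : (z + 1) * (z / (z + 1)) = z := mul_div_cancel₀ z hz₁
  have hN : 0 < normSq (z + 1) := normSq_pos.2 hz₁
  have harg : arg ((z + 1) * (z / (z + 1))) = arg (z + 1) + arg (z / (z + 1)) := by
    rcases hz.lt_or_gt with hneg | hpos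
    · refine arg_mul_of_im_neg (by simpa) ?_ (by rwa [hprod])
      rw [im_div_add_one]
      exact div_neg_of_neg_of_pos hneg hN
    · refine arg_mul_of_im_pos (by simpa) ?_ (by rwa [hprod])
      rw [im_div_add_one]
      positivity
  rw [← mul_cpow_of_arg_mul_eq_add hz₁ (div_ne_zero hz₀ hz₁) harg, hprod]

end Complex

theorem Sm_mul_Tm_inv_mul_Sm : Sm * Tm⁻¹ * Sm = Tm * Sm * Tm := by
  ext i j
  simp only [Matrix.SpecialLinearGroup.coe_mul, Matrix.SpecialLinearGroup.coe_inv]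
  simp [Tm, Sm, Matrix.adjugate_fin_two_of]

theorem stmt8_general {V : Type*} [NormedAddCommGroup V] [NormedSpace ℂ V]
    (η : SL2Z →* Module.End ℂ V) (ν : ℂ)
    (f : ℂ → V)
    (hper : ∀ z : ℂ, z.im ≠ 0 → f (z + 1) = η Tm (f z))
    (ψ : ℂ → V)
    (hψ : ∀ z : ℂ, z.im ≠ 0 →
      ψ z = f z - (z ^ (-2 * ν - 1)) • η Sm (f (-1 / z))) :
    ∀ z : ℂ, z.im ≠ 0 → LewisEq η ν ψ z := by
  intro z hz
  have hz₀ : z ≠ 0 := ne_zero_of_im_ne_zero hz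
  have hz₁ : (z + 1).im ≠ 0 := by simpa using hz
  have hw : (z / (z + 1)).im ≠ 0 := im_div_add_one_ne_zero hz
  have hf₁ : f (z / (z + 1)) = η Tm (f (-1 / (z + 1))) := by
    rw [← hper _ (im_neg_one_div_ne_zero hz₁)]
    congr 1
    field_simp [add_one_ne_zero_of_im_ne_zero hz]
    ring
  have hf₂ : f (-1 / z) = η Tm (f (-1 / (z / (z + 1)))) := by
    rw [← hper _ (im_neg_one_div_ne_zero hw)]
    congr 1
    field_simp
    ring
  have hST_T (x : V) : η (Sm * Tm⁻¹) (η Tm x) = η Sm x := by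
    rw [← Module.End.mul_apply, ← map_mul, inv_mul_cancel_right]
  have hST_S (x : V) : η (Sm * Tm⁻¹) (η Sm x) = η Tm (η Sm (η Tm x)) := by
    rw [← Module.End.mul_apply, ← map_mul, Sm_mul_Tm_inv_mul_Sm, map_mul, map_mul,
      Module.End.mul_apply, Module.End.mul_apply]
  rw [LewisEq, hψ z hz, hψ (z + 1) hz₁, hψ _ hw, hper z hz, hf₁, hf₂]
  simp only [map_sub, map_smul, hST_T, hST_S, smul_sub, smul_smul,
    cpow_add_one_mul_cpow_div_add_one hz]
  abel

/-- If `f` is holomorphic on `ℂ∖ℝ` with `f(z+1) = η(T)f(z)` and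
`ψ(z) = f(z) − z^{−2ν−1}·η(S)f(−1/z)`, then `ψ` satisfies the Lewis equation at
every `z ∈ ℂ∖ℝ`. -/
theorem stmt8 {V : Type*} [NormedAddCommGroup V] [NormedSpace ℂ V]
    [FiniteDimensional ℂ V] [Nontrivial V]
    (η : SL2Z →* Module.End ℂ V) (hη : η negI = 1) (ν : ℂ)
    (f : ℂ → V) (hf : DifferentiableOn ℂ f {z : ℂ | z.im ≠ 0})
    (hper : ∀ z : ℂ, z.im ≠ 0 → f (z + 1) = η Tm (f z))
    (ψ : ℂ → V)
    (hψ : ∀ z : ℂ, z.im ≠ 0 →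
      ψ z = f z - (z ^ (-2 * ν - 1)) • η Sm (f (-1 / z))) :
    ∀ z : ℂ, z.im ≠ 0 → LewisEq η ν ψ z :=
  stmt8_general η ν f hper ψ hψ
end
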